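/- For every integer k ≥ 1, every integer N ≥ k, and all σ,τ ∈ P(k), one has (−1)^{#σ+#τ}·W̊g_k(σ,τ,N) ≥ 0; that is, the sign of the centered Weingarten function W̊g_k(σ,τ,N) is (−1)^{#σ+#τ}. -/

import Mathlib

/-!
Expanding the binomial sum, `W̊g_k(σ,τ,N) = Σ_{π ≤ σ∧τ} μ(π,σ) μ(π,τ) S(#π, d)` with
`S(n, d) = Σ_i C(d,i) (-1)^i N^{-i} / (N)_{n-i}`. The sign of `μ(π,σ)` is `(-1)^{#π-#σ}`, so every
product `μ(π,σ) μ(π,τ)` has sign `(-1)^{#σ+#τ}`, and it remains to show `S(n, d) ≥ 0` for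
`d ≤ n ≤ N` (a singleton of `σ ∨ τ` is a singleton of `π`, so `d ≤ #π`).

Pascal's rule gives `S(n, d+1) = S(n, d) - S(n-1, d) / N`, hence `P_d(n) = N^d (N)_n S(n, d)`
satisfies `P_{d+1}(n) = N (P_d(n) - P_d(n-1)) + (n-1) P_d(n-1)`. Having all forward differences
nonnegative on `[c, ∞)` is preserved by `Δ`, by multiplication with `x` (for `c ≥ 0`), and turns
into the same property on `[c+1, ∞)` under the shift `x ↦ x - 1`; starting from `P_0 = 1`, every
`P_d` thus has this property on `[d, ∞)`, and in particular `P_d(n) ≥ 0` for `n ≥ d`.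
-/

open Finset

noncomputable section

namespace WgPerm

/-- Number of blocks of the partition of `α` corresponding to the setoid `s`. -/
def numBlocks {α : Type*} (s : Setoid α) : ℕ := Nat.card (Quotient s)

/-- Number of blocks of `s` contained in the block `B` of `t` (meaningful when `s ≤ t`). -/
def lam {α : Type*} (s t : Setoid α) (B : Quotient t) : ℕ :=
  Nat.card {c : Quotient s // Quotient.mk t (Quotient.out c) = B}

/-- Möbius function of the partition lattice:
`μ(s,t) = ∏_B (−1)^{λ_B−1} (λ_B−1)!` over the blocks `B` of `t`. -/
def mobius {α : Type*} (s t : Setoid α) : ℤ :=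
  ∏ᶠ B : Quotient t, (-1 : ℤ) ^ (lam s t B - 1) * (Nat.factorial (lam s t B - 1) : ℤ)

/-- Kernel partition `Π_i` of a tuple `i`. -/
def kerP {k N : ℕ} (i : Fin k → Fin N) : Setoid (Fin k) := Setoid.ker i

/-- `(i,j)` entry of the permutation matrix of `g`. -/
def permEntry {N : ℕ} (g : Equiv.Perm (Fin N)) (i j : Fin N) : ℝ :=
  if g i = j then 1 else 0

/-- The Weingarten function for the symmetric group `S_N`. -/
def Wg (k N : ℕ) (σ τ : Setoid (Fin k)) : ℝ :=
  ∑ᶠ π ∈ {π : Setoid (Fin k) | π ≤ σ ⊓ τ},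
    ((mobius π σ * mobius π τ : ℤ) : ℝ) / (Nat.descFactorial N (numBlocks π) : ℝ)

/-- `|D(π)|`: the number of singleton blocks of `π`. -/
def numSingletons {k : ℕ} (π : Setoid (Fin k)) : ℕ :=
  Nat.card {j : Fin k | ∀ m, π.r j m → m = j}

/-- The centered Weingarten function for the symmetric group `S_N`. -/
def cWg (k N : ℕ) (σ τ : Setoid (Fin k)) : ℝ :=
  ∑ i ∈ Finset.range (numSingletons (σ ⊔ τ) + 1),
    ((numSingletons (σ ⊔ τ)).choose i : ℝ) * (-1 : ℝ) ^ i *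
      ∑ᶠ π ∈ {π : Setoid (Fin k) | π ≤ σ ⊓ τ},
        ((mobius π σ * mobius π τ : ℤ) : ℝ) * ((N : ℝ) ^ i)⁻¹
          / (Nat.descFactorial N (numBlocks π - i) : ℝ)

/-- `a_k(N) = Σ_{l=0}^{k} binom(k,l)·(−N)^{−(k−l)}/(N)_l`. -/
def aSeq (k N : ℕ) : ℝ :=
  ∑ l ∈ Finset.range (k + 1),
    (k.choose l : ℝ) * ((-(N : ℝ)) ^ (k - l))⁻¹ / (Nat.descFactorial N l : ℝ)


open fwdDiff

variable {R : Type*} [CommRing R] [PartialOrder R]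

def AbsMonotoneFrom (c : ℤ) (f : ℤ → R) : Prop :=
  ∀ (j : ℕ) (x : ℤ), c ≤ x → 0 ≤ (Δ_[1])^[j] f x

omit [PartialOrder R] in
lemma fwdDiff_id_mul (f : ℤ → R) :
    Δ_[1] (fun x : ℤ => (x : R) * f x)
      = (fun x : ℤ => (x : R) * Δ_[1] f x) + fun x => f (x + 1) := by
  ext x
  simp only [fwdDiff, Pi.add_apply, Int.cast_add, Int.cast_one]
  ring

namespace AbsMonotoneFrom

variable {c : ℤ} {f g : ℤ → R}

lemma nonneg (hf : AbsMonotoneFrom c f) {x : ℤ} (hx : c ≤ x) : 0 ≤ f x :=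
  hf 0 x hx

lemma add [IsOrderedRing R] (hf : AbsMonotoneFrom c f) (hg : AbsMonotoneFrom c g) :
    AbsMonotoneFrom c (f + g) := by
  intro j x hx
  rw [fwdDiff_iter_add]
  exact add_nonneg (hf j x hx) (hg j x hx)

lemma const_smul [IsOrderedRing R] {a : R} (ha : 0 ≤ a) (hf : AbsMonotoneFrom c f) :
    AbsMonotoneFrom c (a • f) := by
  intro j x hx
  rw [fwdDiff_iter_const_smul]
  exact mul_nonneg ha (hf j x hx)

lemma fwdDiff (hf : AbsMonotoneFrom c f) : AbsMonotoneFrom c (Δ_[1] f) := fun j x hx => by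
  simpa only [← Function.iterate_succ_apply] using hf (j + 1) x hx

lemma comp_sub_one (hf : AbsMonotoneFrom c f) : AbsMonotoneFrom (c + 1) (fun x => f (x - 1)) := by
  intro j x hx
  simp only [sub_eq_add_neg, fwdDiff_iter_comp_add]
  exact hf j _ (by omega)

lemma id_mul [IsOrderedRing R] (hc : 0 ≤ c) (hf : AbsMonotoneFrom c f) :
    AbsMonotoneFrom c (fun x => (x : R) * f x) := by
  intro j
  induction j generalizing f with
  | zero => exact fun x hx => mul_nonneg (Int.cast_nonneg (hc.trans hx)) (hf.nonneg hx)
  | succ j ih =>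
    intro x hx
    rw [Function.iterate_succ_apply, fwdDiff_id_mul, fwdDiff_iter_add, Pi.add_apply,
      fwdDiff_iter_comp_add]
    exact add_nonneg (ih hf.fwdDiff x hx) (hf j _ (by omega))

end AbsMonotoneFrom

def centeringPoly (N : ℝ) : ℕ → ℤ → ℝ
  | 0 => fun _ => 1
  | d + 1 => fun n =>
      N * Δ_[1] (centeringPoly N d) (n - 1) + ((n - 1 : ℤ) : ℝ) * centeringPoly N d (n - 1)

lemma absMonotoneFrom_centeringPoly {N : ℝ} (hN : 0 ≤ N) (d : ℕ) :
    AbsMonotoneFrom d (centeringPoly N d) := by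
  induction d with
  | zero =>
    intro j x _
    cases j with
    | zero => exact zero_le_one
    | succ j =>
      rw [Function.iterate_succ_apply, centeringPoly, fwdDiff_const,
        Function.iterate_fixed (fwdDiff_const 1 0)]
  | succ d ih =>
    have h := ((ih.fwdDiff.const_smul hN).add (ih.id_mul d.cast_nonneg)).comp_sub_one
    push_cast
    exact h

def centeringSum (N n d : ℕ) : ℝ :=
  ∑ i ∈ range (d + 1),
    (d.choose i : ℝ) * ((-1) ^ i * ((N : ℝ) ^ i)⁻¹ / (N.descFactorial (n - i) : ℝ))

lemma sum_range_choose_succ_mul {R : Type*} [Semiring R] (f : ℕ → R) (d : ℕ) :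
    ∑ i ∈ range (d + 2), ((d + 1).choose i : R) * f i
      = ∑ i ∈ range (d + 1), (d.choose i : R) * f i
        + ∑ i ∈ range (d + 1), (d.choose i : R) * f (i + 1) := by
  have hshift : ∑ i ∈ range (d + 1), (d.choose i : R) * f i
      = ∑ i ∈ range (d + 1), (d.choose (i + 1) : R) * f (i + 1) + f 0 := by
    rw [sum_range_succ', sum_range_succ (fun i => (d.choose (i + 1) : R) * f (i + 1)),
      Nat.choose_succ_self]
    simp
  rw [sum_range_succ', hshift]
  simp only [Nat.choose_succ_succ', Nat.cast_add, add_mul, sum_add_distrib, Nat.choose_zero_right,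
    Nat.cast_one, one_mul]
  abel

lemma centeringSum_succ (N n d : ℕ) :
    centeringSum N n (d + 1) = centeringSum N n d - centeringSum N (n - 1) d / N := by
  rw [centeringSum, sum_range_choose_succ_mul, centeringSum, centeringSum, sum_div,
    sub_eq_add_neg, ← sum_neg_distrib]
  congr 1
  refine sum_congr rfl fun i _ => ?_
  rw [Nat.sub_sub, add_comm 1 i, pow_succ, pow_succ, mul_inv]
  ring

lemma centeringSum_mul_eq_centeringPoly {N n d : ℕ} (hdn : d ≤ n) (hnN : n ≤ N) :
    centeringSum N n d * ((N : ℝ) ^ d * N.descFactorial n) = centeringPoly N d n := by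
  induction d generalizing n with
  | zero =>
    have : (N.descFactorial n : ℝ) ≠ 0 := by
      exact_mod_cast (Nat.descFactorial_pos.2 hnN).ne'
    simp [centeringSum, centeringPoly, this]
  | succ d ih =>
    obtain ⟨m, rfl⟩ : ∃ m, n = m + 1 := ⟨n - 1, by omega⟩
    have hN : (N : ℝ) ≠ 0 := by exact_mod_cast (show N ≠ 0 by omega)
    have hdesc : (N.descFactorial (m + 1) : ℝ) = ((N : ℝ) - m) * N.descFactorial m := by
      rw [Nat.descFactorial_succ, Nat.cast_mul, Nat.cast_sub (by omega)]
    have ih₁ := ih (n := m + 1) (by omega) hnN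
    have ih₀ := ih (n := m) (by omega) (by omega)
    have hP : centeringPoly N (d + 1) ((m + 1 : ℕ) : ℤ) = N * (centeringPoly N d ((m + 1 : ℕ) : ℤ)
        - centeringPoly N d m) + m * centeringPoly N d m := by
      simp [centeringPoly, fwdDiff]
    rw [hP, ← ih₁, ← ih₀, centeringSum_succ, Nat.add_sub_cancel, hdesc]
    field_simp
    ring

lemma centeringSum_nonneg {N n d : ℕ} (hdn : d ≤ n) (hnN : n ≤ N) : 0 ≤ centeringSum N n d := by
  have hpos : (0 : ℝ) < (N : ℝ) ^ d * N.descFactorial n := by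
    exact_mod_cast Nat.mul_pos (Nat.pow_pos_iff.2 (by omega)) (Nat.descFactorial_pos.2 hnN)
  refine nonneg_of_mul_nonneg_left ?_ hpos
  rw [centeringSum_mul_eq_centeringPoly hdn hnN]
  exact (absMonotoneFrom_centeringPoly N.cast_nonneg d).nonneg (by exact_mod_cast hdn)

section Partitions

variable {α : Type*}

instance instFiniteSetoid [Finite α] : Finite (Setoid α) :=
  Finite.of_injective (fun s : Setoid α => s.r) fun _ _ h =>
    Setoid.ext fun a b => iff_of_eq (congrFun₂ h a b)

lemma numBlocks_le_card [Finite α] (π : Setoid α) : numBlocks π ≤ Nat.card α :=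
  Nat.card_le_card_of_surjective _ Quotient.mk_surjective

lemma lam_pos [Finite α] {π σ : Setoid α} (h : π ≤ σ) (B : Quotient σ) : 0 < lam π σ B := by
  obtain ⟨b, rfl⟩ := Quotient.mk_surjective B
  have : Nonempty {c : Quotient π // Quotient.mk σ (Quotient.out c) = Quotient.mk σ b} :=
    ⟨⟨Quotient.mk π b, Quotient.sound (h (Quotient.exact (Quotient.out_eq _)))⟩⟩
  exact Nat.card_pos

lemma sum_lam [Finite α] (π σ : Setoid α) [Fintype (Quotient σ)] :
    ∑ B, lam π σ B = numBlocks π := by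
  rw [numBlocks, ← Nat.card_congr (Equiv.sigmaFiberEquiv fun c : Quotient π => Quotient.mk σ c.out),
    Nat.card_sigma]
  rfl

lemma neg_one_pow_mul_mobius_nonneg [Finite α] {π σ : Setoid α} (h : π ≤ σ) :
    0 ≤ (-1 : ℤ) ^ (numBlocks π + numBlocks σ) * mobius π σ := by
  have := Fintype.ofFinite (Quotient σ)
  have hsum : ∑ B, (lam π σ B - 1) + numBlocks σ = numBlocks π := by
    rw [← sum_lam π σ, numBlocks, Nat.card_eq_fintype_card, Fintype.card_eq_sum_ones,
      ← sum_add_distrib]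
    exact sum_congr rfl fun B _ => Nat.sub_add_cancel (lam_pos h B)
  rw [mobius, finprod_eq_prod_of_fintype, prod_mul_distrib, prod_pow_eq_pow_sum, ← mul_assoc,
    ← pow_add, ← hsum, Even.neg_one_pow (by rw [Nat.even_iff]; omega), one_mul]
  exact prod_nonneg fun _ _ => by positivity

lemma neg_one_pow_mul_mobius_mul_mobius_nonneg [Finite α] {π σ τ : Setoid α} (hσ : π ≤ σ)
    (hτ : π ≤ τ) : 0 ≤ (-1 : ℤ) ^ (numBlocks σ + numBlocks τ) * (mobius π σ * mobius π τ) := by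
  have hsign : (-1 : ℤ) ^ (numBlocks σ + numBlocks τ)
      = (-1) ^ (numBlocks π + numBlocks σ) * (-1) ^ (numBlocks π + numBlocks τ) := by
    rw [← pow_add, add_add_add_comm, ← two_mul, pow_add _ (2 * _), pow_mul, neg_one_sq, one_pow,
      one_mul]
  rw [hsign, mul_mul_mul_comm]
  exact mul_nonneg (neg_one_pow_mul_mobius_nonneg hσ) (neg_one_pow_mul_mobius_nonneg hτ)

end Partitions

lemma numSingletons_le_numBlocks {k : ℕ} {π ρ : Setoid (Fin k)} (h : π ≤ ρ) :
    numSingletons ρ ≤ numBlocks π :=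
  Nat.card_le_card_of_injective (fun j : {j : Fin k | ∀ m, ρ.r j m → m = j} => Quotient.mk π j.1)
    fun a b hab => Subtype.ext (a.2 b.1 (h (Quotient.exact hab))).symm

lemma cWg_eq_sum_mobius_mul_centeringSum (k N : ℕ) (σ τ : Setoid (Fin k)) :
    cWg k N σ τ = ∑ π ∈ (Set.toFinite {π : Setoid (Fin k) | π ≤ σ ⊓ τ}).toFinset,
      ((mobius π σ * mobius π τ : ℤ) : ℝ)
        * centeringSum N (numBlocks π) (numSingletons (σ ⊔ τ)) := by
  simp only [cWg, centeringSum, finsum_mem_eq_finite_toFinset_sum _ (Set.toFinite _), mul_sum]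
  rw [sum_comm]
  exact sum_congr rfl fun π _ => sum_congr rfl fun i _ => by ring

theorem stmt11_general (k N : ℕ) (hN : k ≤ N) (σ τ : Setoid (Fin k)) :
    0 ≤ (-1 : ℝ) ^ (numBlocks σ + numBlocks τ) * cWg k N σ τ := by
  rw [cWg_eq_sum_mobius_mul_centeringSum, mul_sum]
  refine sum_nonneg fun π hπ => ?_
  obtain ⟨hσ, hτ⟩ : π ≤ σ ∧ π ≤ τ := le_inf_iff.1 (by simpa using hπ)
  rw [← mul_assoc]
  refine mul_nonneg ?_ (centeringSum_nonneg ?_ ?_)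
  · exact_mod_cast neg_one_pow_mul_mobius_mul_mobius_nonneg hσ hτ
  · exact numSingletons_le_numBlocks (hσ.trans le_sup_left)
  · exact (numBlocks_le_card π).trans_eq (Nat.card_fin k) |>.trans hN

/-- the sign of the centered Weingarten function is `(−1)^{#σ+#τ}`. -/
theorem stmt11 (k N : ℕ) (hk : 1 ≤ k) (hN : k ≤ N) (σ τ : Setoid (Fin k)) :
    0 ≤ (-1 : ℝ) ^ (numBlocks σ + numBlocks τ) * cWg k N σ τ :=
  stmt11_general k N hN σ τ

end WgPerm

end
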